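/- arXiv:1710.07762 — 4 statements merged into one kernel-verified Lean document; each statement's English description precedes it below -/
import Mathlib

section
/- Let y : [0,T) → ℝ be continuous nonnegative and satisfy y(t) ≤ y(0) + C ∫₀ᵗ (1 + g(τ)) · ln(e + y(τ)) dτ for all t ∈ [0,T), where g ≥ 0 is integrable on [0,T). Then y(t) ≤ (e + y(0))^{exp(C ∫₀ᵗ (1 + g(τ)) dτ)} − e for all t ∈ [0,T); in particular y stays bounded if ∫₀ᵀ g dτ < ∞. -/
/-!
With `z s = c + ∫ₐˢ k · log (e + y)` we have `y ≤ z`, and `z` is absolutely continuous with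
`z' = k · log (e + y) ≤ k · (e + z) · log (e + z)` almost everywhere. Since `log ∘ log ∘ (e + ·)`
is `1`-Lipschitz on `[0, ∞)`, `w = log (log (e + z))` is again absolutely continuous, with `w' ≤ k`
almost everywhere; the fundamental theorem of calculus for absolutely continuous functions gives
`w b ≤ w a + ∫ₐᵇ k`, and exponentiating twice yields the bound.
-/

open MeasureTheory Set Filter Real

theorem LipschitzOnWith.comp_absolutelyContinuousOnInterval {X Y : Type*} [PseudoMetricSpace X]
    [PseudoMetricSpace Y] {φ : X → Y} {f : ℝ → X} {K : NNReal} {s : Set X} {a b : ℝ}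
    (hφ : LipschitzOnWith K φ s) (hf : AbsolutelyContinuousOnInterval f a b)
    (hmaps : MapsTo f (uIcc a b) s) : AbsolutelyContinuousOnInterval (φ ∘ f) a b := by
  unfold AbsolutelyContinuousOnInterval at hf ⊢
  apply squeeze_zero' (Eventually.of_forall fun _ ↦ Finset.sum_nonneg fun _ _ ↦ dist_nonneg)
    ?_ (by simpa using hf.const_mul (K : ℝ))
  rw [eventually_inf_principal]
  filter_upwards with E hE
  rw [Finset.mul_sum]
  gcongr with i hi
  exact hφ.dist_le_mul _ (hmaps (hE.1 i hi).1) _ (hmaps (hE.1 i hi).2)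

theorem AbsolutelyContinuousOnInterval.sub_le_integral_of_deriv_le {f k : ℝ → ℝ} {a b : ℝ}
    (hab : a ≤ b) (hf : AbsolutelyContinuousOnInterval f a b)
    (hk : IntervalIntegrable k volume a b) (hderiv : ∀ᵐ x, x ∈ Icc a b → deriv f x ≤ k x) :
    f b - f a ≤ ∫ x in a..b, k x := by
  rw [← hf.integral_deriv_eq_sub]
  exact intervalIntegral.integral_mono_ae_restrict hab hf.intervalIntegrable_deriv hk
    ((ae_restrict_iff' measurableSet_Icc).2 hderiv)

theorem Real.lipschitzOnWith_log_Ici_one : LipschitzOnWith 1 log (Ici 1) := by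
  refine Convex.lipschitzOnWith_of_nnnorm_deriv_le (fun x hx ↦ ?_) (fun x hx ↦ ?_) (convex_Ici 1)
  · exact differentiableAt_log (by linarith [mem_Ici.1 hx])
  · rw [deriv_log, ← NNReal.coe_le_coe, coe_nnnorm, norm_eq_abs, NNReal.coe_one,
      abs_inv, abs_of_pos (by linarith [mem_Ici.1 hx])]
    exact inv_le_one_of_one_le₀ hx

theorem Real.lipschitzOnWith_log_log_exp_one_add :
    LipschitzOnWith 1 (fun u ↦ log (log (exp 1 + u))) (Ici 0) := by
  have h_add : MapsTo (exp 1 + ·) (Ici 0) (Ici 1) := fun u hu ↦ by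
    simpa using (one_le_exp zero_le_one).trans (le_add_of_nonneg_right (mem_Ici.1 hu))
  have h_log_add : MapsTo (fun u ↦ log (exp 1 + u)) (Ici 0) (Ici 1) := fun u hu ↦ by
    simpa using log_le_log (exp_pos 1) (le_add_of_nonneg_right (mem_Ici.1 hu))
  simpa [Function.comp_def] using lipschitzOnWith_log_Ici_one.comp
    (lipschitzOnWith_log_Ici_one.comp (isometry_add_left (exp 1)).lipschitz.lipschitzOnWith h_add)
    h_log_add

theorem Real.le_rpow_exp_of_log_log_le {u v I : ℝ} (hu : 1 < u) (hv : 1 < v)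
    (h : log (log v) ≤ log (log u) + I) : v ≤ u ^ exp I := by
  rw [rpow_def_of_pos (by linarith), ← log_le_iff_le_exp (by linarith)]
  calc log v = exp (log (log v)) := (exp_log (log_pos hv)).symm
    _ ≤ exp (log (log u) + I) := exp_le_exp.2 h
    _ = log u * exp I := by rw [exp_add, exp_log (log_pos hu)]

theorem AbsolutelyContinuousOnInterval.exp_one_add_le_rpow_exp_integral {z k : ℝ → ℝ} {a b : ℝ}
    (hab : a ≤ b) (hz : AbsolutelyContinuousOnInterval z a b) (hz_nn : ∀ x ∈ Icc a b, 0 ≤ z x)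
    (hk : IntervalIntegrable k volume a b)
    (hderiv : ∀ᵐ x, x ∈ Icc a b → deriv z x ≤ k x * ((exp 1 + z x) * log (exp 1 + z x))) :
    exp 1 + z b ≤ (exp 1 + z a) ^ exp (∫ x in a..b, k x) := by
  have h_one_lt : ∀ x ∈ Icc a b, 1 < exp 1 + z x := fun x hx ↦ by
    linarith [add_one_lt_exp one_ne_zero, hz_nn x hx]
  have hw : AbsolutelyContinuousOnInterval (fun x ↦ log (log (exp 1 + z x))) a b :=
    lipschitzOnWith_log_log_exp_one_add.comp_absolutelyContinuousOnInterval hz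
      (fun x hx ↦ hz_nn x (uIcc_of_le hab ▸ hx))
  have hw_deriv : ∀ᵐ x, x ∈ Icc a b → deriv (fun x ↦ log (log (exp 1 + z x))) x ≤ k x := by
    filter_upwards [hz.ae_differentiableAt, hderiv] with x hz_diff hzx hx
    have h_pos : 0 < exp 1 + z x := by linarith [h_one_lt x hx]
    have h_log_pos : 0 < log (exp 1 + z x) := log_pos (h_one_lt x hx)
    rw [(((hz_diff (uIcc_of_le hab ▸ hx)).hasDerivAt.const_add (exp 1)).log h_pos.ne').log
      h_log_pos.ne' |>.deriv, div_div, div_le_iff₀ (mul_pos h_pos h_log_pos)]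
    exact hzx hx
  exact le_rpow_exp_of_log_log_le (h_one_lt a ⟨le_rfl, hab⟩) (h_one_lt b ⟨hab, le_rfl⟩)
    (by linarith [hw.sub_le_integral_of_deriv_le hab hk hw_deriv])

theorem le_rpow_exp_integral_of_le_add_integral_mul_log {y k : ℝ → ℝ} {a b c : ℝ} (hab : a ≤ b)
    (hy_cont : ContinuousOn y (Icc a b)) (hy_nn : ∀ x ∈ Icc a b, 0 ≤ y x)
    (hk : IntervalIntegrable k volume a b) (hk_nn : ∀ x ∈ Icc a b, 0 ≤ k x)
    (hineq : ∀ s ∈ Icc a b, y s ≤ c + ∫ τ in a..s, k τ * log (exp 1 + y τ)) :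
    y b ≤ (exp 1 + c) ^ exp (∫ x in a..b, k x) - exp 1 := by
  set z : ℝ → ℝ := fun s ↦ c + ∫ τ in a..s, k τ * log (exp 1 + y τ) with hz_def
  have hf : IntervalIntegrable (fun τ ↦ k τ * log (exp 1 + y τ)) volume a b := by
    refine hk.mul_continuousOn (ContinuousOn.log (continuousOn_const.add hy_cont) ?_ |>.mono ?_)
    · exact fun s hs ↦ (add_pos_of_pos_of_nonneg (exp_pos 1) (hy_nn s hs)).ne'
    · rw [uIcc_of_le hab]
  have hz : AbsolutelyContinuousOnInterval z a b :=
    (LipschitzWith.const c).lipschitzOnWith.absolutelyContinuousOnInterval.fun_add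
      (hf.absolutelyContinuousOnInterval_intervalIntegral left_mem_uIcc)
  have hz_nn : ∀ x ∈ Icc a b, 0 ≤ z x := fun x hx ↦ (hy_nn x hx).trans (hineq x hx)
  have hderiv : ∀ᵐ x, x ∈ Icc a b → deriv z x ≤ k x * ((exp 1 + z x) * log (exp 1 + z x)) := by
    filter_upwards [hf.ae_hasDerivAt_integral] with x hx hx_mem
    have h_one_le : 1 ≤ exp 1 + z x := by
      linarith [add_one_lt_exp one_ne_zero, hz_nn x hx_mem]
    have h_log_le : log (exp 1 + y x) ≤ (exp 1 + z x) * log (exp 1 + z x) :=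
      (log_le_log (by linarith [exp_pos 1, hy_nn x hx_mem]) (by linarith [hineq x hx_mem])).trans
        (le_mul_of_one_le_left (log_nonneg h_one_le) h_one_le)
    rw [((hx (uIcc_of_le hab ▸ hx_mem) a left_mem_uIcc).const_add c).deriv]
    exact mul_le_mul_of_nonneg_left h_log_le (hk_nn x hx_mem)
  have key := hz.exp_one_add_le_rpow_exp_integral hab hz_nn hk hderiv
  simp only [hz_def, intervalIntegral.integral_same, add_zero] at key
  linarith [hineq b ⟨hab, le_rfl⟩]

theorem stmt2_general (C T : ℝ) (hC : 0 < C) (y g : ℝ → ℝ)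
    (hy_cont : ContinuousOn y (Set.Ico 0 T))
    (hy_nn : ∀ t ∈ Set.Ico (0:ℝ) T, 0 ≤ y t)
    (hg_nn : ∀ t ∈ Set.Ico (0:ℝ) T, 0 ≤ g t)
    (hg_int : IntegrableOn g (Set.Ico 0 T))
    (hineq : ∀ t ∈ Set.Ico (0:ℝ) T,
      y t ≤ y 0 + C * ∫ τ in (0:ℝ)..t, (1 + g τ) * Real.log (Real.exp 1 + y τ)) :
    ∀ t ∈ Set.Ico (0:ℝ) T,
      y t ≤ (Real.exp 1 + y 0) ^ (Real.exp (C * ∫ τ in (0:ℝ)..t, (1 + g τ)))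
              - Real.exp 1 := by
  intro t ⟨ht0, htT⟩
  have hsub : Icc 0 t ⊆ Ico 0 T := fun s hs ↦ ⟨hs.1, hs.2.trans_lt htT⟩
  have h1g : IntervalIntegrable (fun τ ↦ 1 + g τ) volume 0 t :=
    (intervalIntegrable_iff_integrableOn_Icc_of_le ht0).2
      (integrableOn_const (by simp) |>.add (hg_int.mono_set hsub))
  rw [← intervalIntegral.integral_const_mul]
  refine le_rpow_exp_integral_of_le_add_integral_mul_log ht0 (hy_cont.mono hsub)
    (fun s hs ↦ hy_nn s (hsub hs)) (h1g.const_mul C)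
    (fun s hs ↦ mul_nonneg hC.le (by linarith [hg_nn s (hsub hs)])) (fun s hs ↦ ?_)
  simpa only [mul_assoc, intervalIntegral.integral_const_mul] using hineq s (hsub hs)

/-- logarithmic Gronwall inequality. If `y` is continuous and nonnegative
on `[0,T)` and satisfies `y t ≤ y 0 + C ∫₀ᵗ (1 + g τ) log(e + y τ) dτ` with `g ≥ 0`
integrable, then `y t ≤ (e + y 0)^{exp(C ∫₀ᵗ (1+g))} − e` on `[0,T)`. -/
theorem stmt2 (C T : ℝ) (hC : 0 < C) (hT : 0 < T) (y g : ℝ → ℝ)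
    (hy_cont : ContinuousOn y (Set.Ico 0 T))
    (hy_nn : ∀ t ∈ Set.Ico (0:ℝ) T, 0 ≤ y t)
    (hg_nn : ∀ t ∈ Set.Ico (0:ℝ) T, 0 ≤ g t)
    (hg_int : IntegrableOn g (Set.Ico 0 T))
    (hineq : ∀ t ∈ Set.Ico (0:ℝ) T,
      y t ≤ y 0 + C * ∫ τ in (0:ℝ)..t, (1 + g τ) * Real.log (Real.exp 1 + y τ)) :
    ∀ t ∈ Set.Ico (0:ℝ) T,
      y t ≤ (Real.exp 1 + y 0) ^ (Real.exp (C * ∫ τ in (0:ℝ)..t, (1 + g τ)))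
              - Real.exp 1 :=
  stmt2_general C T hC y g hy_cont hy_nn hg_nn hg_int hineq
end

section
/- For 1 ≤ r ≤ 2, the paraproduct satisfies ‖Ṫ_u v‖_{FḂ⁰₁,r} ≤ C ‖u‖_{FḂ⁻¹₁,r} ‖v‖_{FḂ¹₁,r}, where Ṫ_u v = Σ_j Ṡ_{j−1}u Δ̇_j v and C depends only on d and r. -/
open MeasureTheory
open scoped ENNReal

noncomputable section

/-- `L¹` norm (in `ℝ≥0∞`) of the `j`-th homogeneous Littlewood–Paley block of `U = û`,
computed on the frequency side: `‖φ(2^{-j}·) U‖_{L¹}`. -/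
def blockL1 (d : ℕ) (φ : EuclideanSpace ℝ (Fin d) → ℝ) (j : ℤ)
    (U : EuclideanSpace ℝ (Fin d) → ℂ) : ℝ≥0∞ :=
  ∫⁻ ξ, (‖(φ ((2:ℝ)^(-j) • ξ) : ℂ) * U ξ‖₊ : ℝ≥0∞)

/-- The homogeneous Fourier–Besov norm `‖·‖_{FḂ^s_{1,r}}` computed on the frequency
side from `U = û`. -/
def FBnorm (d : ℕ) (φ : EuclideanSpace ℝ (Fin d) → ℝ) (s r : ℝ)
    (U : EuclideanSpace ℝ (Fin d) → ℂ) : ℝ≥0∞ :=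
  (∑' j : ℤ, (ENNReal.ofReal ((2:ℝ) ^ ((j:ℝ)*s)) * blockL1 d φ j U) ^ r) ^ (1/r)

/-- Frequency-side convolution. -/
def fconv (d : ℕ) (F G : EuclideanSpace ℝ (Fin d) → ℂ)
    (ξ : EuclideanSpace ℝ (Fin d)) : ℂ :=
  ∫ η, F η * G (ξ - η)

/-- Frequency side of the low-frequency cut-off `Ṡ_{m+1} u = Σ_{k ≤ m} Δ̇_k u`. -/
def slowFT (d : ℕ) (φ : EuclideanSpace ℝ (Fin d) → ℝ) (m : ℤ)
    (U : EuclideanSpace ℝ (Fin d) → ℂ) (ξ : EuclideanSpace ℝ (Fin d)) : ℂ :=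
  ((∑' k : ℤ, if k ≤ m then φ ((2:ℝ)^(-k) • ξ) else 0 : ℝ) : ℂ) * U ξ

/-- Frequency side of the paraproduct `Ṫ_u v = Σ_j Ṡ_{j-1}u Δ̇_j v`:
`(Ṫ_u v)^ = Σ_j (Ṡ_{j-1}u)^ ⋆ (Δ̇_j v)^`. -/
def paraFT (d : ℕ) (φ : EuclideanSpace ℝ (Fin d) → ℝ)
    (U V : EuclideanSpace ℝ (Fin d) → ℂ) (ξ : EuclideanSpace ℝ (Fin d)) : ℂ :=
  ∑' j : ℤ, fconv d (slowFT d φ (j-2) U)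
    (fun ζ => (φ ((2:ℝ)^(-j) • ζ) : ℂ) * V ζ) ξ

namespace Stmt5Aux

variable {d : ℕ} {φ : EuclideanSpace ℝ (Fin d) → ℝ}

/-- The scalar multiplier of the low-frequency cutoff. -/
def Sc (φ : EuclideanSpace ℝ (Fin d) → ℝ) (m : ℤ) (ξ : EuclideanSpace ℝ (Fin d)) : ℝ :=
  ∑' k : ℤ, if k ≤ m then φ ((2:ℝ)^(-k) • ξ) else 0

lemma slowFT_eq (m : ℤ) (U : EuclideanSpace ℝ (Fin d) → ℂ) (ξ) :
    slowFT d φ m U ξ = ((Sc φ m ξ : ℝ) : ℂ) * U ξ := rfl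

lemma norm_zpow_smul (j : ℤ) (ξ : EuclideanSpace ℝ (Fin d)) :
    ‖(2:ℝ)^(-j) • ξ‖ = (2:ℝ)^(-j) * ‖ξ‖ := by
  rw [norm_smul, Real.norm_eq_abs, abs_of_pos (zpow_pos two_pos _)]

section supp
variable (hφ_supp : Function.support φ ⊆
      {ξ : EuclideanSpace ℝ (Fin d) | 3/4 ≤ ‖ξ‖ ∧ ‖ξ‖ ≤ 8/3})
include hφ_supp

lemma phi_zero : φ 0 = 0 := by
  by_contra h
  have h2 := (hφ_supp h).1
  rw [norm_zero] at h2
  linarith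

lemma block_supp {j : ℤ} {ξ : EuclideanSpace ℝ (Fin d)} (h : φ ((2:ℝ)^(-j) • ξ) ≠ 0) :
    3/4 * (2:ℝ)^j ≤ ‖ξ‖ ∧ ‖ξ‖ ≤ 8/3 * (2:ℝ)^j := by
  obtain ⟨h1, h2⟩ := hφ_supp h
  rw [norm_zpow_smul] at h1 h2
  have hp : (0:ℝ) < (2:ℝ)^j := zpow_pos two_pos j
  have he : (2:ℝ)^(-j) * (2:ℝ)^j = 1 := by
    rw [zpow_neg]; exact inv_mul_cancel₀ (ne_of_gt hp)
  constructor <;> nlinarith [zpow_pos (show (0:ℝ) < 2 by norm_num) (-j)]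

lemma summable_phi (ξ : EuclideanSpace ℝ (Fin d)) :
    (∀ ζ ≠ (0:EuclideanSpace ℝ (Fin d)), (∑' j : ℤ, φ ((2:ℝ)^(-j) • ζ)) = 1) →
    Summable (fun k : ℤ => φ ((2:ℝ)^(-k) • ξ)) := by
  intro hsum
  by_cases hξ : ξ = 0
  · subst hξ
    simp only [smul_zero, phi_zero hφ_supp]
    exact summable_zero
  · by_contra h
    have := tsum_eq_zero_of_not_summable h
    rw [hsum ξ hξ] at this
    norm_num at this
end supp

section main
variable (hφ_range : ∀ ξ, φ ξ ∈ Set.Icc (0:ℝ) 1)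
  (hφ_supp : Function.support φ ⊆
      {ξ : EuclideanSpace ℝ (Fin d) | 3/4 ≤ ‖ξ‖ ∧ ‖ξ‖ ≤ 8/3})
  (hφ_sum : ∀ ξ : EuclideanSpace ℝ (Fin d), ξ ≠ 0 →
      (∑' j : ℤ, φ ((2:ℝ)^(-j) • ξ)) = 1)
include hφ_range hφ_supp hφ_sum

lemma summable_ite (m : ℤ) (ξ : EuclideanSpace ℝ (Fin d)) :
    Summable (fun k : ℤ => if k ≤ m then φ ((2:ℝ)^(-k) • ξ) else 0) := by
  refine Summable.of_nonneg_of_le (fun k => ?_) (fun k => ?_)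
    (summable_phi hφ_supp ξ hφ_sum)
  · split <;> simp [(hφ_range _).1]
  · split
    · exact le_refl _
    · exact (hφ_range _).1

lemma Sc_nonneg (m : ℤ) (ξ : EuclideanSpace ℝ (Fin d)) : 0 ≤ Sc φ m ξ := by
  refine tsum_nonneg fun k => ?_
  split <;> simp [(hφ_range _).1]

lemma Sc_le_one (m : ℤ) (ξ : EuclideanSpace ℝ (Fin d)) : Sc φ m ξ ≤ 1 := by
  by_cases hξ : ξ = 0
  · subst hξ
    have : Sc φ m (0:EuclideanSpace ℝ (Fin d)) = 0 := by
      unfold Sc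
      simp only [smul_zero, phi_zero hφ_supp, ite_self, tsum_zero]
    rw [this]; norm_num
  · rw [← hφ_sum ξ hξ]
    refine Summable.tsum_le_tsum (fun k => ?_) (summable_ite hφ_range hφ_supp hφ_sum m ξ)
      (summable_phi hφ_supp ξ hφ_sum)
    split
    · exact le_refl _
    · exact (hφ_range _).1

lemma ofReal_Sc (m : ℤ) (ξ : EuclideanSpace ℝ (Fin d)) :
    ENNReal.ofReal (Sc φ m ξ) =
      ∑' k : ℤ, ENNReal.ofReal (if k ≤ m then φ ((2:ℝ)^(-k) • ξ) else 0) := by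
  refine ENNReal.ofReal_tsum_of_nonneg (fun k => ?_) (summable_ite hφ_range hφ_supp hφ_sum m ξ)
  split <;> simp [(hφ_range _).1]

lemma Sc_measurable (hφm : Measurable φ) (m : ℤ) : Measurable (Sc φ m) := by
  have h : Sc φ m = fun ξ =>
      (∑' k : ℤ, ENNReal.ofReal (if k ≤ m then φ ((2:ℝ)^(-k) • ξ) else 0)).toReal := by
    funext ξ
    rw [← ofReal_Sc hφ_range hφ_supp hφ_sum,
      ENNReal.toReal_ofReal (Sc_nonneg hφ_range hφ_supp hφ_sum m ξ)]
  rw [h]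
  refine Measurable.ennreal_toReal (Measurable.ennreal_tsum fun k => ?_)
  split
  · exact (hφm.comp (measurable_const_smul _)).ennreal_ofReal
  · exact measurable_const

lemma slowFT_measurable (hφm : Measurable φ) (m : ℤ)
    {U : EuclideanSpace ℝ (Fin d) → ℂ} (hU : Measurable U) :
    Measurable (slowFT d φ m U) :=
  (Complex.measurable_ofReal.comp (Sc_measurable hφ_range hφ_supp hφ_sum hφm m)).mul hU

omit hφ_range hφ_supp hφ_sum in
lemma blockL1_eq (hφ_range : ∀ ξ, φ ξ ∈ Set.Icc (0:ℝ) 1) (k : ℤ)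
    (U : EuclideanSpace ℝ (Fin d) → ℂ) :
    blockL1 d φ k U = ∫⁻ ξ, ENNReal.ofReal (φ ((2:ℝ)^(-k) • ξ)) * (‖U ξ‖₊ : ℝ≥0∞) := by
  unfold blockL1
  congr 1
  funext ξ
  rw [nnnorm_mul, ENNReal.coe_mul, Complex.nnnorm_real,
    ← enorm_eq_nnnorm, Real.enorm_eq_ofReal (hφ_range _).1]

/-- L¹ norm of the slow cutoff equals the sum of the block norms. -/
lemma lintegral_slow (hφm : Measurable φ) (m : ℤ)
    {U : EuclideanSpace ℝ (Fin d) → ℂ} (hU : Measurable U) :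
    ∫⁻ ξ, (‖slowFT d φ m U ξ‖₊ : ℝ≥0∞) =
      ∑' k : ℤ, if k ≤ m then blockL1 d φ k U else 0 := by
  have h1 : ∀ ξ, (‖slowFT d φ m U ξ‖₊ : ℝ≥0∞) =
      ∑' k : ℤ, (if k ≤ m then ENNReal.ofReal (φ ((2:ℝ)^(-k) • ξ)) * (‖U ξ‖₊ : ℝ≥0∞) else 0) := by
    intro ξ
    rw [slowFT_eq, nnnorm_mul, ENNReal.coe_mul, Complex.nnnorm_real,
      ← enorm_eq_nnnorm, Real.enorm_eq_ofReal (Sc_nonneg hφ_range hφ_supp hφ_sum m ξ),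
      ofReal_Sc hφ_range hφ_supp hφ_sum, ← ENNReal.tsum_mul_right]
    congr 1
    funext k
    split
    · rfl
    · simp
  calc ∫⁻ ξ, (‖slowFT d φ m U ξ‖₊ : ℝ≥0∞)
      = ∫⁻ ξ, ∑' k : ℤ,
          (if k ≤ m then ENNReal.ofReal (φ ((2:ℝ)^(-k) • ξ)) * (‖U ξ‖₊ : ℝ≥0∞) else 0) := by
        exact lintegral_congr h1
    _ = ∑' k : ℤ, ∫⁻ ξ,
          (if k ≤ m then ENNReal.ofReal (φ ((2:ℝ)^(-k) • ξ)) * (‖U ξ‖₊ : ℝ≥0∞) else 0) := by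
        refine lintegral_tsum fun k => ?_
        split
        · exact (((hφm.comp (measurable_const_smul _)).ennreal_ofReal).mul
            hU.nnnorm.coe_nnreal_ennreal).aemeasurable
        · exact aemeasurable_const
    _ = ∑' k : ℤ, if k ≤ m then blockL1 d φ k U else 0 := by
        congr 1
        funext k
        split
        · rw [blockL1_eq hφ_range]
        · simp


omit hφ_range hφ_supp hφ_sum in
lemma fconv_measurable {F G : EuclideanSpace ℝ (Fin d) → ℂ}
    (hF : Measurable F) (hG : Measurable G) : Measurable (fconv d F G) := by
  have h : Measurable (fun p : (EuclideanSpace ℝ (Fin d)) × (EuclideanSpace ℝ (Fin d)) =>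
      F p.2 * G (p.1 - p.2)) :=
    (hF.comp measurable_snd).mul (hG.comp (measurable_fst.sub measurable_snd))
  exact (h.stronglyMeasurable.integral_prod_right').measurable

omit hφ_range hφ_supp hφ_sum in
lemma lintegral_fconv_le {F G : EuclideanSpace ℝ (Fin d) → ℂ}
    (hF : Measurable F) (hG : Measurable G) :
    ∫⁻ ξ, (‖fconv d F G ξ‖₊ : ℝ≥0∞) ≤
      (∫⁻ η, (‖F η‖₊ : ℝ≥0∞)) * ∫⁻ ζ, (‖G ζ‖₊ : ℝ≥0∞) := by
  have hmeas : AEMeasurable (Function.uncurry fun ξ η =>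
      ((‖F η‖₊ : ℝ≥0∞) * (‖G (ξ - η)‖₊ : ℝ≥0∞))) (volume.prod volume) := by
    refine Measurable.aemeasurable ?_
    exact ((hF.comp measurable_snd).nnnorm.coe_nnreal_ennreal).mul
      ((hG.comp (measurable_fst.sub measurable_snd)).nnnorm.coe_nnreal_ennreal)
  calc ∫⁻ ξ, (‖fconv d F G ξ‖₊ : ℝ≥0∞)
      ≤ ∫⁻ ξ, ∫⁻ η, (‖F η‖₊ : ℝ≥0∞) * (‖G (ξ - η)‖₊ : ℝ≥0∞) := by
        refine lintegral_mono fun ξ => ?_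
        refine (enorm_integral_le_lintegral_enorm _).trans_eq ?_
        congr 1
        funext η
        rw [enorm_mul, enorm_eq_nnnorm, enorm_eq_nnnorm]
    _ = ∫⁻ η, ∫⁻ ξ, (‖F η‖₊ : ℝ≥0∞) * (‖G (ξ - η)‖₊ : ℝ≥0∞) := lintegral_lintegral_swap hmeas
    _ = ∫⁻ η, (‖F η‖₊ : ℝ≥0∞) * ∫⁻ ξ, (‖G (ξ - η)‖₊ : ℝ≥0∞) := by
        refine lintegral_congr fun η => ?_
        exact lintegral_const_mul' _ _ ENNReal.coe_ne_top
    _ = ∫⁻ η, (‖F η‖₊ : ℝ≥0∞) * ∫⁻ ζ, (‖G ζ‖₊ : ℝ≥0∞) := by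
        refine lintegral_congr fun η => ?_
        congr 1
        exact lintegral_sub_right_eq_self (fun ζ => (‖G ζ‖₊ : ℝ≥0∞)) η
    _ = (∫⁻ η, (‖F η‖₊ : ℝ≥0∞)) * ∫⁻ ζ, (‖G ζ‖₊ : ℝ≥0∞) :=
        lintegral_mul_const _ hF.nnnorm.coe_nnreal_ennreal

omit hφ_range hφ_sum in
/-- If `ξ` lies in the annulus of block `j` and `j'` is outside the window
`[j-2, j+5]`, then the `j'`-th term of the paraproduct vanishes at `ξ`. -/
lemma fconv_vanish {U V : EuclideanSpace ℝ (Fin d) → ℂ} {j j' : ℤ}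
    (hwin : ¬ (j - 2 ≤ j' ∧ j' ≤ j + 5)) {ξ : EuclideanSpace ℝ (Fin d)}
    (hξ : φ ((2:ℝ)^(-j) • ξ) ≠ 0) :
    fconv d (slowFT d φ (j'-2) U) (fun ζ => (φ ((2:ℝ)^(-j') • ζ) : ℂ) * V ζ) ξ = 0 := by
  have hzero : (fun η => slowFT d φ (j'-2) U η *
      ((φ ((2:ℝ)^(-j') • (ξ - η)) : ℂ) * V (ξ - η))) = fun _ => (0:ℂ) := by
    funext η
    by_cases hS : slowFT d φ (j'-2) U η = 0
    · rw [hS, zero_mul]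
    by_cases hB : φ ((2:ℝ)^(-j') • (ξ - η)) = 0
    · rw [hB]; simp
    exfalso
    -- bounds
    have hξb := block_supp hφ_supp hξ
    have hη : ‖η‖ ≤ 8/3 * (2:ℝ)^(j'-2) := by
      -- from slowFT ≠ 0
      have hSc : Sc φ (j'-2) η ≠ 0 := by
        intro h0
        apply hS
        rw [slowFT_eq, h0]
        simp
      have : ∃ k : ℤ, (if k ≤ j'-2 then φ ((2:ℝ)^(-k) • η) else 0) ≠ 0 := by
        by_contra hall
        push_neg at hall
        apply hSc
        unfold Sc
        rw [tsum_congr hall, tsum_zero]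
      obtain ⟨k, hk⟩ := this
      have hkle : k ≤ j' - 2 := by
        by_contra hgt
        rw [if_neg hgt] at hk
        exact hk rfl
      rw [if_pos hkle] at hk
      have := (block_supp hφ_supp hk).2
      refine this.trans ?_
      have : (2:ℝ)^k ≤ (2:ℝ)^(j'-2) := zpow_le_zpow_right₀ one_le_two hkle
      linarith
    have hζ := block_supp hφ_supp hB
    -- triangle inequalities
    have ht1 : ‖ξ‖ ≤ ‖ξ - η‖ + ‖η‖ := by
      have := norm_add_le (ξ - η) η
      simpa using this
    have ht2 : ‖ξ - η‖ ≤ ‖ξ‖ + ‖η‖ := by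
      have := norm_sub_le ξ η
      linarith [norm_sub_le ξ η]
    have h2j : (0:ℝ) < (2:ℝ)^j := zpow_pos two_pos j
    have h2j' : (0:ℝ) < (2:ℝ)^j' := zpow_pos two_pos j'
    have hq : (2:ℝ)^(j'-2) = (2:ℝ)^j' / 4 := by
      rw [zpow_sub₀ (by norm_num : (2:ℝ) ≠ 0)]
      norm_num
    rw [hq] at hη
    rcases not_and_or.mp hwin with hlt | hgt
    · -- j' ≤ j - 3 : high output frequency impossible
      have hj' : j' ≤ j - 3 := by omega
      have h2 : (2:ℝ)^j' ≤ (2:ℝ)^(j-3) := zpow_le_zpow_right₀ one_le_two hj'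
      have hq2 : (2:ℝ)^(j-3) = (2:ℝ)^j / 8 := by
        rw [zpow_sub₀ (by norm_num : (2:ℝ) ≠ 0)]
        norm_num
      rw [hq2] at h2
      -- ‖ξ‖ ≤ ‖ξ-η‖ + ‖η‖ ≤ 8/3 2^{j'} + 2/3 2^{j'} = 10/3 2^{j'} ≤ 10/3 * 2^j/8 < 3/4 2^j
      linarith [hξb.1, hζ.2]
    · -- j' ≥ j + 6 : ‖ξ‖ ≥ ‖ξ-η‖ - ‖η‖ ≥ (3/4 - 2/3) 2^{j'} = 2^{j'}/12 ≥ 2^{j+6}/12 > 8/3 2^j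
      have hj' : j + 6 ≤ j' := by omega
      have h2 : (2:ℝ)^(j+6) ≤ (2:ℝ)^j' := zpow_le_zpow_right₀ one_le_two hj'
      have hq2 : (2:ℝ)^(j+6) = 64 * (2:ℝ)^j := by
        rw [zpow_add₀ (by norm_num : (2:ℝ) ≠ 0)]
        norm_num
        ring
      rw [hq2] at h2
      linarith [hξb.2, hζ.1]
  unfold fconv
  rw [hzero, integral_zero]

lemma blockL1_para_le (hφm : Measurable φ) {U V : EuclideanSpace ℝ (Fin d) → ℂ}
    (hU : Measurable U) (hV : Measurable V) (j : ℤ) :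
    blockL1 d φ j (paraFT d φ U V) ≤
      ∑ j' ∈ Finset.Icc (j-2) (j+5),
        (∫⁻ η, (‖slowFT d φ (j'-2) U η‖₊ : ℝ≥0∞)) * blockL1 d φ j' V := by
  set s : Finset ℤ := Finset.Icc (j-2) (j+5) with hs
  set g : ℤ → EuclideanSpace ℝ (Fin d) → ℂ := fun j' ξ =>
    fconv d (slowFT d φ (j'-2) U) (fun ζ => (φ ((2:ℝ)^(-j') • ζ) : ℂ) * V ζ) ξ with hg
  have hb : ∀ j' : ℤ, Measurable (fun ζ => (φ ((2:ℝ)^(-j') • ζ) : ℂ) * V ζ) := fun j' =>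
    (Complex.measurable_ofReal.comp (hφm.comp (measurable_const_smul _))).mul hV
  have hgm : ∀ j' : ℤ, Measurable (g j') := fun j' =>
    fconv_measurable (slowFT_measurable hφ_range hφ_supp hφ_sum hφm _ hU) (hb j')
  have hstep1 : ∀ ξ, (‖(φ ((2:ℝ)^(-j) • ξ) : ℂ) * paraFT d φ U V ξ‖₊ : ℝ≥0∞) ≤
      ∑ j' ∈ s, (‖(φ ((2:ℝ)^(-j) • ξ) : ℂ) * g j' ξ‖₊ : ℝ≥0∞) := by
    intro ξ
    by_cases hφξ : φ ((2:ℝ)^(-j) • ξ) = 0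
    · rw [hφξ]
      simp only [Complex.ofReal_zero, zero_mul, nnnorm_zero, ENNReal.coe_zero]
      exact zero_le
    · have hpt : paraFT d φ U V ξ = ∑ j' ∈ s, g j' ξ := by
        refine tsum_eq_sum fun j' hj' => ?_
        refine fconv_vanish hφ_supp ?_ hφξ
        simpa [hs, Finset.mem_Icc] using hj'
      rw [show (φ ((2:ℝ)^(-j) • ξ) : ℂ) * paraFT d φ U V ξ
          = ∑ j' ∈ s, (φ ((2:ℝ)^(-j) • ξ) : ℂ) * g j' ξ by rw [hpt, Finset.mul_sum]]
      refine le_trans (ENNReal.coe_le_coe.mpr (nnnorm_sum_le _ _)) ?_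
      rw [ENNReal.coe_finset_sum]
  calc blockL1 d φ j (paraFT d φ U V)
      ≤ ∫⁻ ξ, ∑ j' ∈ s, (‖(φ ((2:ℝ)^(-j) • ξ) : ℂ) * g j' ξ‖₊ : ℝ≥0∞) :=
        lintegral_mono hstep1
    _ = ∑ j' ∈ s, ∫⁻ ξ, (‖(φ ((2:ℝ)^(-j) • ξ) : ℂ) * g j' ξ‖₊ : ℝ≥0∞) := by
        refine lintegral_finset_sum s fun j' _ => ?_
        exact ((Complex.measurable_ofReal.comp
          (hφm.comp (measurable_const_smul _))).mul (hgm j')).nnnorm.coe_nnreal_ennreal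
    _ ≤ ∑ j' ∈ s, (∫⁻ η, (‖slowFT d φ (j'-2) U η‖₊ : ℝ≥0∞)) * blockL1 d φ j' V := by
        refine Finset.sum_le_sum fun j' _ => ?_
        have hpt : ∀ ξ, (‖(φ ((2:ℝ)^(-j) • ξ) : ℂ) * g j' ξ‖₊ : ℝ≥0∞) ≤ (‖g j' ξ‖₊ : ℝ≥0∞) := by
          intro ξ
          rw [nnnorm_mul, ENNReal.coe_mul]
          have h1 : (‖(φ ((2:ℝ)^(-j) • ξ) : ℂ)‖₊ : ℝ≥0∞) ≤ 1 := by
            rw [Complex.nnnorm_real, ← enorm_eq_nnnorm, Real.enorm_eq_ofReal (hφ_range _).1]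
            exact ENNReal.ofReal_le_one.mpr (hφ_range _).2
          calc (‖(φ ((2:ℝ)^(-j) • ξ) : ℂ)‖₊ : ℝ≥0∞) * (‖g j' ξ‖₊ : ℝ≥0∞)
              ≤ 1 * (‖g j' ξ‖₊ : ℝ≥0∞) := mul_le_mul_left h1 _
            _ = (‖g j' ξ‖₊ : ℝ≥0∞) := one_mul _
        refine le_trans (lintegral_mono hpt) ?_
        exact lintegral_fconv_le (slowFT_measurable hφ_range hφ_supp hφ_sum hφm _ hU) (hb j')

end main

lemma tsum_ite_zpow (m : ℤ) :
    (∑' k : ℤ, if k ≤ m then ENNReal.ofReal ((2:ℝ)^k) else 0)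
      = ENNReal.ofReal ((2:ℝ)^(m+1)) := by
  set f : ℤ → ℝ≥0∞ := fun k => if k ≤ m then ENNReal.ofReal ((2:ℝ)^k) else 0 with hf
  have hinj : Function.Injective (fun n : ℕ => m - (n:ℤ)) := by
    intro a b h
    simp only [sub_right_injective.eq_iff, Int.natCast_inj] at h
    exact_mod_cast h
  have hsupp : Function.support f ⊆ Set.range (fun n : ℕ => m - (n:ℤ)) := by
    intro k hk
    have hk' : k ≤ m := by
      by_contra h
      apply hk
      simp [hf, if_neg h]
    exact ⟨(m - k).toNat, show m - (((m - k).toNat : ℕ) : ℤ) = k by omega⟩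
  rw [← hinj.tsum_eq hsupp]
  have heq : ∀ n : ℕ, f (m - (n:ℤ)) = ENNReal.ofReal ((2:ℝ)^m) * (ENNReal.ofReal (2⁻¹))^n := by
    intro n
    have h1 : (m - (n:ℤ)) ≤ m := by omega
    rw [hf]
    simp only [if_pos h1]
    rw [← ENNReal.ofReal_pow (by norm_num), ← ENNReal.ofReal_mul (by positivity)]
    congr 1
    rw [zpow_sub₀ (by norm_num : (2:ℝ) ≠ 0), zpow_natCast, div_eq_mul_inv, inv_pow]
  calc ∑' n : ℕ, f (m - (n:ℤ))
      = ∑' n : ℕ, ENNReal.ofReal ((2:ℝ)^m) * (ENNReal.ofReal (2⁻¹))^n := tsum_congr heq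
    _ = ENNReal.ofReal ((2:ℝ)^m) * ∑' n : ℕ, (ENNReal.ofReal (2⁻¹))^n := ENNReal.tsum_mul_left
    _ = ENNReal.ofReal ((2:ℝ)^m) * 2 := by
        rw [ENNReal.tsum_geometric]
        congr 1
        rw [ENNReal.ofReal_inv_of_pos two_pos]
        norm_num
    _ = ENNReal.ofReal ((2:ℝ)^(m+1)) := by
        rw [zpow_add_one₀ (by norm_num : (2:ℝ) ≠ 0), ENNReal.ofReal_mul (by positivity)]
        congr 1
        norm_num

lemma le_rpow_tsum {a : ℤ → ℝ≥0∞} {r : ℝ} (hr : 0 < r) (k : ℤ) :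
    a k ≤ (∑' i, (a i)^r)^(1/r) := by
  have h1 : a k = ((a k)^r)^(1/r) := by
    rw [← ENNReal.rpow_mul, mul_one_div, div_self (ne_of_gt hr), ENNReal.rpow_one]
  rw [h1]
  exact ENNReal.rpow_le_rpow (ENNReal.le_tsum k) (by positivity)

lemma sum_rpow_le {ι : Type*} (s : Finset ι) (x : ι → ℝ≥0∞) {r : ℝ} (hr0 : 0 < r) :
    (∑ i ∈ s, x i)^r ≤ (s.card : ℝ≥0∞)^r * ∑ i ∈ s, (x i)^r := by
  rcases s.eq_empty_or_nonempty with hs | hne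
  · subst hs
    simp [ENNReal.zero_rpow_of_pos hr0]
  · obtain ⟨i0, hi0, hmax⟩ := s.exists_max_image x hne
    calc (∑ i ∈ s, x i)^r ≤ ((s.card : ℝ≥0∞) * x i0)^r := by
          refine ENNReal.rpow_le_rpow ?_ hr0.le
          have := Finset.sum_le_card_nsmul s x (x i0) (fun i hi => hmax i hi)
          rwa [nsmul_eq_mul] at this
      _ = (s.card : ℝ≥0∞)^r * (x i0)^r := ENNReal.mul_rpow_of_nonneg _ _ hr0.le
      _ ≤ (s.card : ℝ≥0∞)^r * ∑ i ∈ s, (x i)^r :=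
          mul_le_mul_right (Finset.single_le_sum (f := fun i => (x i)^r) (fun i _ => zero_le) hi0) _

end Stmt5Aux

/-- paraproduct estimate `‖Ṫ_u v‖_{FḂ⁰_{1,r}} ≤ C ‖u‖_{FḂ⁻¹_{1,r}}
‖v‖_{FḂ¹_{1,r}}` for `1 ≤ r ≤ 2`, with `C = C(d, r)`. -/
theorem stmt5 (d : ℕ) (hd : 1 ≤ d) (r : ℝ) (hr1 : 1 ≤ r) (hr2 : r ≤ 2)
    (φ : EuclideanSpace ℝ (Fin d) → ℝ) (hφ_smooth : ContDiff ℝ (⊤ : ℕ∞) φ)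
    (hφ_range : ∀ ξ, φ ξ ∈ Set.Icc (0:ℝ) 1)
    (hφ_supp : Function.support φ ⊆
      {ξ : EuclideanSpace ℝ (Fin d) | 3/4 ≤ ‖ξ‖ ∧ ‖ξ‖ ≤ 8/3})
    (hφ_sum : ∀ ξ : EuclideanSpace ℝ (Fin d), ξ ≠ 0 →
      (∑' j : ℤ, φ ((2:ℝ)^(-j) • ξ)) = 1) :
    ∃ C : ℝ, 0 < C ∧ ∀ U V : EuclideanSpace ℝ (Fin d) → ℂ,
      Measurable U → Measurable V →
      FBnorm d φ 0 r (paraFT d φ U V) ≤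
        ENNReal.ofReal C * FBnorm d φ (-1) r U * FBnorm d φ 1 r V := by
  classical
  have hφm : Measurable φ := hφ_smooth.continuous.measurable
  have hr0 : (0:ℝ) < r := lt_of_lt_of_le one_pos hr1
  refine ⟨64, by norm_num, fun U V hU hV => ?_⟩
  set A := FBnorm d φ (-1) r U with hA
  set B := FBnorm d φ 1 r V with hB
  set c : ℤ → ℝ≥0∞ := fun k => ENNReal.ofReal ((2:ℝ)^k) * blockL1 d φ k V with hc
  have hwm1 : ∀ k : ℤ, ENNReal.ofReal ((2:ℝ)^((k:ℝ)*(-1))) = ENNReal.ofReal ((2:ℝ)^(-k)) := by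
    intro k
    congr 1
    rw [mul_neg_one, ← Int.cast_neg, Real.rpow_intCast]
  have hw1 : ∀ k : ℤ, ENNReal.ofReal ((2:ℝ)^((k:ℝ)*1)) = ENNReal.ofReal ((2:ℝ)^(k:ℤ)) := by
    intro k
    congr 1
    rw [mul_one, Real.rpow_intCast]
  -- elementwise bound for blocks of U
  have hUblock : ∀ k : ℤ, blockL1 d φ k U ≤ ENNReal.ofReal ((2:ℝ)^(k:ℤ)) * A := by
    intro k
    have h1 : ENNReal.ofReal ((2:ℝ)^(-k)) * blockL1 d φ k U ≤ A := by
      rw [hA, ← hwm1 k]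
      exact Stmt5Aux.le_rpow_tsum hr0 k
    have h2 : ENNReal.ofReal ((2:ℝ)^(k:ℤ)) * ENNReal.ofReal ((2:ℝ)^(-k)) = 1 := by
      rw [← ENNReal.ofReal_mul (by positivity), ← zpow_add₀ (by norm_num : (2:ℝ) ≠ 0)]
      simp
    calc blockL1 d φ k U
        = (ENNReal.ofReal ((2:ℝ)^(k:ℤ)) * ENNReal.ofReal ((2:ℝ)^(-k))) * blockL1 d φ k U := by
          rw [h2, one_mul]
      _ = ENNReal.ofReal ((2:ℝ)^(k:ℤ)) * (ENNReal.ofReal ((2:ℝ)^(-k)) * blockL1 d φ k U) :=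
          mul_assoc _ _ _
      _ ≤ ENNReal.ofReal ((2:ℝ)^(k:ℤ)) * A := mul_le_mul_right h1 _
  -- the low-frequency cutoff bound
  have hslow : ∀ m : ℤ, (∫⁻ η, (‖slowFT d φ m U η‖₊ : ℝ≥0∞)) ≤
      ENNReal.ofReal ((2:ℝ)^(m+1)) * A := by
    intro m
    rw [Stmt5Aux.lintegral_slow hφ_range hφ_supp hφ_sum hφm m hU]
    calc (∑' k : ℤ, if k ≤ m then blockL1 d φ k U else 0)
        ≤ ∑' k : ℤ, (if k ≤ m then ENNReal.ofReal ((2:ℝ)^(k:ℤ)) else 0) * A := by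
          refine ENNReal.tsum_le_tsum fun k => ?_
          by_cases hk : k ≤ m
          · rw [if_pos hk, if_pos hk]
            exact hUblock k
          · rw [if_neg hk, if_neg hk, zero_mul]
      _ = (∑' k : ℤ, if k ≤ m then ENNReal.ofReal ((2:ℝ)^(k:ℤ)) else 0) * A :=
          ENNReal.tsum_mul_right
      _ = ENNReal.ofReal ((2:ℝ)^(m+1)) * A := by rw [Stmt5Aux.tsum_ite_zpow]
  -- block bound for the paraproduct
  have hpara : ∀ j : ℤ, blockL1 d φ j (paraFT d φ U V) ≤
      A * ∑ j' ∈ Finset.Icc (j-2) (j+5), c j' := by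
    intro j
    refine (Stmt5Aux.blockL1_para_le hφ_range hφ_supp hφ_sum hφm hU hV j).trans ?_
    rw [Finset.mul_sum]
    refine Finset.sum_le_sum fun j' _ => ?_
    have h2 : ENNReal.ofReal ((2:ℝ)^(j'-2+1)) ≤ ENNReal.ofReal ((2:ℝ)^(j':ℤ)) :=
      ENNReal.ofReal_le_ofReal (zpow_le_zpow_right₀ one_le_two (by omega))
    calc (∫⁻ η, (‖slowFT d φ (j'-2) U η‖₊ : ℝ≥0∞)) * blockL1 d φ j' V
        ≤ (ENNReal.ofReal ((2:ℝ)^(j'-2+1)) * A) * blockL1 d φ j' V :=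
          mul_le_mul_left (hslow _) _
      _ ≤ (ENNReal.ofReal ((2:ℝ)^(j':ℤ)) * A) * blockL1 d φ j' V :=
          mul_le_mul_left (mul_le_mul_left h2 _) _
      _ = A * (ENNReal.ofReal ((2:ℝ)^(j':ℤ)) * blockL1 d φ j' V) := by ring
      _ = A * c j' := rfl
  -- ℓ^r assembly
  have h8 : (8:ℝ≥0∞) ≤ (8:ℝ≥0∞)^r := by
    calc (8:ℝ≥0∞) = (8:ℝ≥0∞)^(1:ℝ) := (ENNReal.rpow_one 8).symm
      _ ≤ (8:ℝ≥0∞)^r := ENNReal.rpow_le_rpow_of_exponent_le (by norm_num) hr1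
  have hcB : ∀ t : ℤ, ∑' j : ℤ, (c (j+t))^r = B^r := by
    intro t
    have hshift : ∑' j : ℤ, (c (j+t))^r = ∑' j : ℤ, (c j)^r := by
      simpa using (Equiv.addRight t).tsum_eq (fun j => (c j)^r)
    have hcw : ∀ j : ℤ, (c j)^r
        = (ENNReal.ofReal ((2:ℝ)^((j:ℝ)*1)) * blockL1 d φ j V)^r := by
      intro j
      rw [hw1 j]
    rw [hshift, hB, FBnorm, ← ENNReal.rpow_mul, one_div, inv_mul_cancel₀ (ne_of_gt hr0),
      ENNReal.rpow_one]
    exact tsum_congr hcw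
  have hwr : ∀ j : ℤ, (ENNReal.ofReal ((2:ℝ)^((j:ℝ)*0)) * blockL1 d φ j (paraFT d φ U V))^r
      = (blockL1 d φ j (paraFT d φ U V))^r := by
    intro j
    rw [mul_zero, Real.rpow_zero, ENNReal.ofReal_one, one_mul]
  have hcard : ((Finset.Icc (-2:ℤ) 5).card : ℝ≥0∞) = 8 := by
    norm_num [Int.card_Icc]
    rfl
  calc FBnorm d φ 0 r (paraFT d φ U V)
      = (∑' j : ℤ, (blockL1 d φ j (paraFT d φ U V))^r)^(1/r) := by
        rw [FBnorm]
        congr 1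
        exact tsum_congr hwr
    _ ≤ (∑' j : ℤ, (A * ∑ j' ∈ Finset.Icc (j-2) (j+5), c j')^r)^(1/r) :=
        ENNReal.rpow_le_rpow
          (ENNReal.tsum_le_tsum fun j => ENNReal.rpow_le_rpow (hpara j) hr0.le)
          (one_div_nonneg.mpr hr0.le)
    _ ≤ (∑' j : ℤ, A^r * ((8:ℝ≥0∞)^r * ∑ t ∈ Finset.Icc (-2:ℤ) 5, (c (j+t))^r))^(1/r) := by
        refine ENNReal.rpow_le_rpow (ENNReal.tsum_le_tsum fun j => ?_)
          (one_div_nonneg.mpr hr0.le)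
        rw [ENNReal.mul_rpow_of_nonneg _ _ hr0.le]
        refine mul_le_mul_right ?_ _
        have hre : ∑ j' ∈ Finset.Icc (j-2) (j+5), c j'
            = ∑ t ∈ Finset.Icc (-2:ℤ) 5, c (j+t) := by
          have hmap : Finset.Icc (j-2) (j+5)
              = Finset.map (addLeftEmbedding j) (Finset.Icc (-2:ℤ) 5) := by
            rw [Finset.map_add_left_Icc, show j + (-2:ℤ) = j - 2 from by ring]
          rw [hmap, Finset.sum_map]
          rfl
        rw [hre]
        have := Stmt5Aux.sum_rpow_le (Finset.Icc (-2:ℤ) 5) (fun t => c (j+t)) hr0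
        rwa [hcard] at this
    _ = (A^r * (8:ℝ≥0∞)^r * ((8:ℝ≥0∞) * B^r))^(1/r) := by
        congr 1
        rw [ENNReal.tsum_mul_left, ENNReal.tsum_mul_left,
          Summable.tsum_finsetSum (fun t _ => ENNReal.summable)]
        have : ∑ t ∈ Finset.Icc (-2:ℤ) 5, ∑' j : ℤ, (c (j+t))^r
            = ∑ t ∈ Finset.Icc (-2:ℤ) 5, B^r := Finset.sum_congr rfl fun t _ => hcB t
        rw [this, Finset.sum_const, nsmul_eq_mul, hcard, mul_assoc]
    _ ≤ ((A * (8*8) * B)^r)^(1/r) := by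
        refine ENNReal.rpow_le_rpow ?_ (one_div_nonneg.mpr hr0.le)
        calc A^r * (8:ℝ≥0∞)^r * ((8:ℝ≥0∞) * B^r)
            ≤ A^r * (8:ℝ≥0∞)^r * ((8:ℝ≥0∞)^r * B^r) :=
              mul_le_mul_right (mul_le_mul_left h8 _) _
          _ = (A * (8*8) * B)^r := by
              rw [ENNReal.mul_rpow_of_nonneg (A * (8*8)) B hr0.le,
                ENNReal.mul_rpow_of_nonneg A (8*8) hr0.le,
                ENNReal.mul_rpow_of_nonneg (8:ℝ≥0∞) (8:ℝ≥0∞) hr0.le]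
              ring
    _ = A * (8*8) * B := by
        rw [← ENNReal.rpow_mul, mul_one_div, div_self (ne_of_gt hr0), ENNReal.rpow_one]
    _ = ENNReal.ofReal 64 * A * B := by
        rw [show ((8:ℝ≥0∞) * 8) = 64 from by norm_num,
          show ENNReal.ofReal (64:ℝ) = 64 from by norm_num]
        ring


end
end

section
/- For 1 ≤ r ≤ 2, the remainder term in Bony's decomposition satisfies ‖Ṙ(u,v)‖_{FḂ⁰₁,r} ≤ C ‖u‖_{FḂ⁻¹₁,r} ‖v‖_{FḂ¹₁,r}, where Ṙ(u,v) = Σ_j Σ_{|k−j|≤1} Δ̇_j u Δ̇_k v. -/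
open MeasureTheory
open scoped ENNReal

noncomputable section

/-- Frequency side of Bony's remainder `Ṙ(u,v) = Σ_j Σ_{|k-j|≤1} Δ̇_j u Δ̇_k v`:
`(Ṙ(u,v))^ = Σ_j Σ_{|k-j|≤1} (Δ̇_j u)^ ⋆ (Δ̇_k v)^`. -/
def remFT (d : ℕ) (φ : EuclideanSpace ℝ (Fin d) → ℝ)
    (U V : EuclideanSpace ℝ (Fin d) → ℂ) (ξ : EuclideanSpace ℝ (Fin d)) : ℂ :=
  ∑' j : ℤ, ∑ k ∈ Finset.Icc (j-1) (j+1),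
    fconv d (fun ζ => (φ ((2:ℝ)^(-j) • ζ) : ℂ) * U ζ)
      (fun ζ => (φ ((2:ℝ)^(-k) • ζ) : ℂ) * V ζ) ξ

/-! ### Auxiliary lemmas -/

private lemma lp_mono_aux (x : ℤ → ℝ≥0∞) {p q : ℝ} (hp : 0 < p) (hpq : p ≤ q) :
    (∑' j, x j ^ q) ^ (1/q) ≤ (∑' j, x j ^ p) ^ (1/p) := by
  have hq : 0 < q := hp.trans_le hpq
  set S := ∑' j, x j ^ p with hS
  have hxS : ∀ j, x j ≤ S ^ (1/p) := by
    intro j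
    have h1 : x j ^ p ≤ S := ENNReal.le_tsum j
    have h2 := ENNReal.rpow_le_rpow h1 (le_of_lt (by positivity : (0:ℝ) < 1/p))
    rwa [← ENNReal.rpow_mul, mul_one_div, div_self hp.ne', ENNReal.rpow_one] at h2
  have key : ∑' j, x j ^ q ≤ S ^ (q/p) := by
    have hpt : ∀ j, x j ^ q ≤ x j ^ p * (S ^ (1/p)) ^ (q - p) := by
      intro j
      calc x j ^ q = x j ^ p * x j ^ (q - p) := by
            rw [← ENNReal.rpow_add_of_nonneg _ _ hp.le (by linarith)]; ring_nf
        _ ≤ x j ^ p * (S ^ (1/p)) ^ (q - p) :=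
            mul_le_mul_right (ENNReal.rpow_le_rpow (hxS j) (by linarith)) _
    calc ∑' j, x j ^ q ≤ ∑' j, x j ^ p * (S ^ (1/p)) ^ (q - p) := ENNReal.tsum_le_tsum hpt
      _ = S * (S ^ (1/p)) ^ (q - p) := by rw [ENNReal.tsum_mul_right]
      _ = S ^ (q/p) := by
          rw [← ENNReal.rpow_mul]
          nth_rewrite 1 [← ENNReal.rpow_one S]
          rw [← ENNReal.rpow_add_of_nonneg _ _ zero_le_one
            (mul_nonneg (by positivity) (by linarith) : (0:ℝ) ≤ 1/p*(q-p))]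
          congr 1
          field_simp
          ring
  have := ENNReal.rpow_le_rpow key (le_of_lt (by positivity : (0:ℝ) < 1/q))
  rw [← ENNReal.rpow_mul, show q/p*(1/q) = 1/p by field_simp] at this
  exact this

private lemma cs_aux (A B : ℤ → ℝ≥0∞) :
    ∑' j, A j * B j ≤ (∑' j, A j ^ (2:ℝ)) ^ (1/2:ℝ) * (∑' j, B j ^ (2:ℝ)) ^ (1/2:ℝ) := by
  have hconj : Real.HolderConjugate 2 2 := Real.HolderConjugate.two_two
  have h := ENNReal.lintegral_mul_le_Lp_mul_Lq (Measure.count : Measure ℤ) hconj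
    (measurable_of_countable A).aemeasurable (measurable_of_countable B).aemeasurable
  simpa [lintegral_count, one_div] using h

private lemma enorm_tsum_le_aux (f : ℤ → ℂ) :
    (‖∑' j, f j‖₊ : ℝ≥0∞) ≤ ∑' j, (‖f j‖₊ : ℝ≥0∞) := by
  by_cases h : Summable fun j => ‖f j‖₊
  · rw [← ENNReal.coe_tsum h]
    exact_mod_cast nnnorm_tsum_le h
  · have : ∑' j, (‖f j‖₊ : ℝ≥0∞) = ∞ := by
      by_contra h'
      exact h (ENNReal.tsum_coe_ne_top_iff_summable.mp h')
    simp [this]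

private lemma shift_sum (a b : ℤ → ℝ≥0∞) (i : ℤ) :
    ∑' j : ℤ, a j * b (j + i) ≤ ENNReal.ofReal ((2:ℝ) ^ (-(i:ℝ))) *
      ((∑' j : ℤ, (ENNReal.ofReal ((2:ℝ) ^ ((j:ℝ) * (-1))) * a j) ^ (2:ℝ)) ^ (1/2:ℝ) *
       (∑' k : ℤ, (ENNReal.ofReal ((2:ℝ) ^ ((k:ℝ) * 1)) * b k) ^ (2:ℝ)) ^ (1/2:ℝ)) := by
  set A : ℤ → ℝ≥0∞ := fun j => ENNReal.ofReal ((2:ℝ) ^ ((j:ℝ) * (-1))) * a j with hA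
  set B : ℤ → ℝ≥0∞ := fun k => ENNReal.ofReal ((2:ℝ) ^ ((k:ℝ) * 1)) * b k with hB
  have key : ∀ j : ℤ, a j * b (j + i)
      = ENNReal.ofReal ((2:ℝ) ^ (-(i:ℝ))) * (A j * B (j + i)) := by
    intro j
    rw [hA, hB]
    simp only
    calc a j * b (j + i)
        = (ENNReal.ofReal ((2:ℝ) ^ (-(i:ℝ))) * ENNReal.ofReal ((2:ℝ) ^ ((j:ℝ) * (-1)))
            * ENNReal.ofReal ((2:ℝ) ^ ((((j+i):ℤ):ℝ) * 1))) * (a j * b (j + i)) := by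
          rw [← ENNReal.ofReal_mul (by positivity), ← ENNReal.ofReal_mul (by positivity),
            ← Real.rpow_add two_pos, ← Real.rpow_add two_pos,
            show -(i:ℝ) + (j:ℝ)*(-1) + (((j+i):ℤ):ℝ) * 1 = 0 by push_cast; ring,
            Real.rpow_zero, ENNReal.ofReal_one, one_mul]
      _ = ENNReal.ofReal ((2:ℝ) ^ (-(i:ℝ))) *
            ((ENNReal.ofReal ((2:ℝ) ^ ((j:ℝ) * (-1))) * a j)
              * (ENNReal.ofReal ((2:ℝ) ^ ((((j+i):ℤ):ℝ) * 1)) * b (j + i))) := by ring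
  calc ∑' j : ℤ, a j * b (j + i)
      = ENNReal.ofReal ((2:ℝ) ^ (-(i:ℝ))) * ∑' j : ℤ, A j * B (j + i) := by
        rw [← ENNReal.tsum_mul_left]; exact tsum_congr key
    _ ≤ ENNReal.ofReal ((2:ℝ) ^ (-(i:ℝ))) *
          ((∑' j : ℤ, A j ^ (2:ℝ)) ^ (1/2:ℝ) * (∑' j : ℤ, (B (j + i)) ^ (2:ℝ)) ^ (1/2:ℝ)) :=
        mul_le_mul_right (cs_aux A (fun j => B (j + i))) _
    _ = ENNReal.ofReal ((2:ℝ) ^ (-(i:ℝ))) *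
          ((∑' j : ℤ, A j ^ (2:ℝ)) ^ (1/2:ℝ) * (∑' k : ℤ, B k ^ (2:ℝ)) ^ (1/2:ℝ)) := by
        congr 3
        have h := (Equiv.addRight i).tsum_eq (fun k => B k ^ (2:ℝ))
        simpa [Equiv.coe_addRight] using h

/-- The `j`-th frequency block. -/
private def Fb (d : ℕ) (φ : EuclideanSpace ℝ (Fin d) → ℝ) (j : ℤ)
    (U : EuclideanSpace ℝ (Fin d) → ℂ) : EuclideanSpace ℝ (Fin d) → ℂ :=
  fun ζ => (φ ((2:ℝ)^(-j) • ζ) : ℂ) * U ζ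

private lemma Fb_meas {d : ℕ} {φ : EuclideanSpace ℝ (Fin d) → ℝ} (hφc : Continuous φ)
    (j : ℤ) {U : EuclideanSpace ℝ (Fin d) → ℂ} (hU : Measurable U) :
    Measurable (Fb d φ j U) :=
  (Complex.measurable_ofReal.comp
    ((hφc.comp (continuous_const_smul _)).measurable)).mul hU

private lemma blockL1_eq (d : ℕ) (φ : EuclideanSpace ℝ (Fin d) → ℝ) (j : ℤ)
    (U : EuclideanSpace ℝ (Fin d) → ℂ) :
    blockL1 d φ j U = ∫⁻ ξ, (‖Fb d φ j U ξ‖₊ : ℝ≥0∞) := rfl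

private lemma remFT_eq (d : ℕ) (φ : EuclideanSpace ℝ (Fin d) → ℝ)
    (U V : EuclideanSpace ℝ (Fin d) → ℂ) (ξ : EuclideanSpace ℝ (Fin d)) :
    remFT d φ U V ξ = ∑' j : ℤ, ∑ k ∈ Finset.Icc (j-1) (j+1),
      fconv d (Fb d φ j U) (Fb d φ k V) ξ := rfl

private lemma conv_bound {d : ℕ} (F G : EuclideanSpace ℝ (Fin d) → ℂ)
    (hF : Measurable F) (hG : Measurable G) :
    ∫⁻ ξ, (‖fconv d F G ξ‖₊ : ℝ≥0∞) ≤
      (∫⁻ η, (‖F η‖₊ : ℝ≥0∞)) * ∫⁻ η, (‖G η‖₊ : ℝ≥0∞) := by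
  have step1 : ∫⁻ ξ, (‖fconv d F G ξ‖₊ : ℝ≥0∞) ≤
      ∫⁻ ξ, ∫⁻ η, (‖F η‖₊ : ℝ≥0∞) * (‖G (ξ - η)‖₊ : ℝ≥0∞) := by
    refine lintegral_mono fun ξ => ?_
    refine le_trans (enorm_integral_le_lintegral_enorm _) (lintegral_mono fun η => ?_)
    simp [nnnorm_mul]
    exact le_rfl
  refine step1.trans (le_of_eq ?_)
  have hmeas : Measurable fun p : (EuclideanSpace ℝ (Fin d)) × (EuclideanSpace ℝ (Fin d)) =>
      (‖F p.2‖₊ : ℝ≥0∞) * (‖G (p.1 - p.2)‖₊ : ℝ≥0∞) :=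
    ((hF.comp measurable_snd).enorm).mul
      ((hG.comp (measurable_fst.sub measurable_snd)).enorm)
  rw [lintegral_lintegral_swap hmeas.aemeasurable]
  have hinner : ∀ η, (∫⁻ ξ, (‖F η‖₊ : ℝ≥0∞) * (‖G (ξ - η)‖₊ : ℝ≥0∞))
      = (‖F η‖₊ : ℝ≥0∞) * ∫⁻ ζ, (‖G ζ‖₊ : ℝ≥0∞) := by
    intro η
    have hGm : Measurable fun ζ : EuclideanSpace ℝ (Fin d) => (‖G (ζ - η)‖₊ : ℝ≥0∞) := by
      have h1 : Measurable fun ζ : EuclideanSpace ℝ (Fin d) => ζ - η :=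
        measurable_id.sub measurable_const
      exact (hG.comp h1).enorm
    rw [lintegral_const_mul _ hGm,
      lintegral_sub_right_eq_self (fun ζ => (‖G ζ‖₊ : ℝ≥0∞)) η]
  simp_rw [hinner]
  exact lintegral_mul_const _ hF.enorm

private lemma fconv_aemeas {d : ℕ} (F G : EuclideanSpace ℝ (Fin d) → ℂ)
    (hF : Measurable F) (hG : Measurable G) :
    AEMeasurable (fun ξ => (‖fconv d F G ξ‖₊ : ℝ≥0∞)) := by
  have h : AEStronglyMeasurable (fun ξ => fconv d F G ξ) volume := by
    exact MeasureTheory.AEStronglyMeasurable.integral_prod_right'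
      (f := fun p : (EuclideanSpace ℝ (Fin d)) × (EuclideanSpace ℝ (Fin d)) =>
        F p.2 * G (p.1 - p.2))
      (((hF.comp measurable_snd).mul
        (hG.comp (measurable_fst.sub measurable_snd))).aestronglyMeasurable)
  exact h.enorm

private lemma summable_phi {d : ℕ} (φ : EuclideanSpace ℝ (Fin d) → ℝ)
    (hφ_supp : Function.support φ ⊆
      {ξ : EuclideanSpace ℝ (Fin d) | 3/4 ≤ ‖ξ‖ ∧ ‖ξ‖ ≤ 8/3})
    {ξ : EuclideanSpace ℝ (Fin d)} (hξ : ξ ≠ 0) :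
    Summable fun l : ℤ => φ ((2:ℝ)^(-l) • ξ) := by
  have hξpos : 0 < ‖ξ‖ := norm_pos_iff.mpr hξ
  obtain ⟨n, hn⟩ := pow_unbounded_of_one_lt (8 / (3 * ‖ξ‖)) (one_lt_two (α := ℝ))
  obtain ⟨m, hm⟩ := pow_unbounded_of_one_lt (4 * ‖ξ‖ / 3) (one_lt_two (α := ℝ))
  apply summable_of_ne_finset_zero (s := Finset.Icc (-(n:ℤ)) (m:ℤ))
  intro l hl
  by_contra h0
  apply hl
  have hsupp := hφ_supp h0
  have hnorm : ‖(2:ℝ)^(-l) • ξ‖ = (2:ℝ)^(-l) * ‖ξ‖ := by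
    rw [norm_smul, Real.norm_eq_abs, abs_of_pos (zpow_pos two_pos _)]
  rw [Set.mem_setOf_eq, hnorm] at hsupp
  obtain ⟨h1, h2⟩ := hsupp
  have hub : (2:ℝ)^(-l) < (2:ℝ)^((n:ℤ)) := by
    calc (2:ℝ)^(-l) ≤ 8/(3*‖ξ‖) := by
          rw [le_div_iff₀ (by positivity)]; nlinarith [zpow_pos (two_pos (α := ℝ)) (-l)]
      _ < 2^n := hn
      _ = (2:ℝ)^((n:ℤ)) := (zpow_natCast 2 n).symm
  have hlb : (2:ℝ)^(-(m:ℤ)) < (2:ℝ)^(-l) := by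
    have h3 : (2:ℝ)^(-(m:ℤ)) = ((2:ℝ)^m)⁻¹ := by
      rw [zpow_neg, zpow_natCast]
    have h4 : ((2:ℝ)^m)⁻¹ < (4*‖ξ‖/3)⁻¹ := inv_strictAnti₀ (by positivity) hm
    have h5 : (4*‖ξ‖/3)⁻¹ ≤ (2:ℝ)^(-l) := by
      rw [inv_le_iff_one_le_mul₀ (by positivity)]
      have := zpow_pos (two_pos (α := ℝ)) (-l)
      nlinarith
    rw [h3]; exact lt_of_lt_of_le h4 h5
  have e1 : -l < (n:ℤ) := (zpow_lt_zpow_iff_right₀ (one_lt_two (α := ℝ))).mp hub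
  have e2 : -(m:ℤ) < -l := (zpow_lt_zpow_iff_right₀ (one_lt_two (α := ℝ))).mp hlb
  exact Finset.mem_Icc.mpr ⟨by omega, by omega⟩

/-- Main summation estimate: the sum of the block `L¹` norms of the remainder is controlled
by the double sum of products of block norms. -/
private lemma main_est {d : ℕ} (hd : 1 ≤ d) (φ : EuclideanSpace ℝ (Fin d) → ℝ)
    (hφc : Continuous φ)
    (hφ_range : ∀ ξ, φ ξ ∈ Set.Icc (0:ℝ) 1)
    (hφ_supp : Function.support φ ⊆
      {ξ : EuclideanSpace ℝ (Fin d) | 3/4 ≤ ‖ξ‖ ∧ ‖ξ‖ ≤ 8/3})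
    (hφ_sum : ∀ ξ : EuclideanSpace ℝ (Fin d), ξ ≠ 0 →
      (∑' j : ℤ, φ ((2:ℝ)^(-j) • ξ)) = 1)
    (U V : EuclideanSpace ℝ (Fin d) → ℂ) (hU : Measurable U) (hV : Measurable V) :
    ∑' l : ℤ, blockL1 d φ l (remFT d φ U V) ≤
      ∑' j : ℤ, ∑ k ∈ Finset.Icc (j-1) (j+1), blockL1 d φ j U * blockL1 d φ k V := by
  set H : EuclideanSpace ℝ (Fin d) → ℝ≥0∞ := fun ξ => ∑' j : ℤ,
    ∑ k ∈ Finset.Icc (j-1) (j+1), (‖fconv d (Fb d φ j U) (Fb d φ k V) ξ‖₊ : ℝ≥0∞) with hHdef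
  have hH : AEMeasurable H (volume : Measure (EuclideanSpace ℝ (Fin d))) :=
    AEMeasurable.ennreal_tsum fun j => Finset.aemeasurable_fun_sum _ fun k _ =>
      fconv_aemeas _ _ (Fb_meas hφc j hU) (Fb_meas hφc k hV)
  have hremH : ∀ ξ, (‖remFT d φ U V ξ‖₊ : ℝ≥0∞) ≤ H ξ := by
    intro ξ
    rw [remFT_eq]
    refine le_trans (enorm_tsum_le_aux _) (ENNReal.tsum_le_tsum fun j => ?_)
    exact_mod_cast nnnorm_sum_le _ _
  have step_l : ∀ l : ℤ, blockL1 d φ l (remFT d φ U V) ≤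
      ∫⁻ ξ, ENNReal.ofReal (φ ((2:ℝ)^(-l) • ξ)) * H ξ := by
    intro l
    refine lintegral_mono fun ξ => ?_
    calc (‖(φ ((2:ℝ)^(-l) • ξ) : ℂ) * remFT d φ U V ξ‖₊ : ℝ≥0∞)
        = (‖φ ((2:ℝ)^(-l) • ξ)‖₊ : ℝ≥0∞) * ‖remFT d φ U V ξ‖₊ := by
          rw [nnnorm_mul, ENNReal.coe_mul, Complex.nnnorm_real]
      _ = ENNReal.ofReal (φ ((2:ℝ)^(-l) • ξ)) * ‖remFT d φ U V ξ‖₊ := by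
          rw [← Real.enorm_eq_ofReal (hφ_range _).1]; rfl
      _ ≤ _ := mul_le_mul_right (hremH ξ) _
  have hφl_meas : ∀ l : ℤ, Measurable fun ξ : EuclideanSpace ℝ (Fin d) =>
      ENNReal.ofReal (φ ((2:ℝ)^(-l) • ξ)) := fun l =>
    (hφc.comp (continuous_const_smul _)).measurable.ennreal_ofReal
  have sum_le : ∑' l : ℤ, blockL1 d φ l (remFT d φ U V) ≤ ∫⁻ ξ, H ξ := by
    calc ∑' l : ℤ, blockL1 d φ l (remFT d φ U V)
        ≤ ∑' l : ℤ, ∫⁻ ξ, ENNReal.ofReal (φ ((2:ℝ)^(-l) • ξ)) * H ξ :=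
          ENNReal.tsum_le_tsum step_l
      _ = ∫⁻ ξ, ∑' l : ℤ, ENNReal.ofReal (φ ((2:ℝ)^(-l) • ξ)) * H ξ :=
          (lintegral_tsum fun l => ((hφl_meas l).aemeasurable.mul hH)).symm
      _ ≤ ∫⁻ ξ, H ξ := by
          apply lintegral_mono_ae
          have h0 : (volume : Measure (EuclideanSpace ℝ (Fin d))) {0} = 0 := by
            have : Nonempty (Fin d) := ⟨⟨0, hd⟩⟩
            have : Nontrivial (EuclideanSpace ℝ (Fin d)) := inferInstance
            exact measure_singleton 0
          have hae : ∀ᵐ ξ : EuclideanSpace ℝ (Fin d), ξ ≠ 0 := by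
            rw [ae_iff]
            simpa using h0
          filter_upwards [hae] with ξ hξ
          rw [ENNReal.tsum_mul_right,
            ← ENNReal.ofReal_tsum_of_nonneg (fun l => (hφ_range _).1)
              (summable_phi φ hφ_supp hξ),
            hφ_sum ξ hξ, ENNReal.ofReal_one, one_mul]
  refine sum_le.trans ?_
  have intH : ∫⁻ ξ, H ξ = ∑' j : ℤ, ∑ k ∈ Finset.Icc (j-1) (j+1),
      ∫⁻ ξ, (‖fconv d (Fb d φ j U) (Fb d φ k V) ξ‖₊ : ℝ≥0∞) := by
    rw [hHdef, lintegral_tsum (fun j => Finset.aemeasurable_fun_sum _ fun k _ =>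
      fconv_aemeas _ _ (Fb_meas hφc j hU) (Fb_meas hφc k hV))]
    exact tsum_congr fun j => lintegral_finset_sum' _ fun k _ =>
      fconv_aemeas _ _ (Fb_meas hφc j hU) (Fb_meas hφc k hV)
  rw [intH]
  refine ENNReal.tsum_le_tsum fun j => Finset.sum_le_sum fun k _ => ?_
  rw [blockL1_eq d φ j U, blockL1_eq d φ k V]
  exact conv_bound _ _ (Fb_meas hφc j hU) (Fb_meas hφc k hV)

/-- remainder estimate `‖Ṙ(u,v)‖_{FḂ⁰_{1,r}} ≤ C ‖u‖_{FḂ⁻¹_{1,r}}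
‖v‖_{FḂ¹_{1,r}}` for `1 ≤ r ≤ 2`, with `C = C(d, r)`. -/
theorem stmt6 (d : ℕ) (hd : 1 ≤ d) (r : ℝ) (hr1 : 1 ≤ r) (hr2 : r ≤ 2)
    (φ : EuclideanSpace ℝ (Fin d) → ℝ) (hφ_smooth : ContDiff ℝ (⊤ : ℕ∞) φ)
    (hφ_range : ∀ ξ, φ ξ ∈ Set.Icc (0:ℝ) 1)
    (hφ_supp : Function.support φ ⊆
      {ξ : EuclideanSpace ℝ (Fin d) | 3/4 ≤ ‖ξ‖ ∧ ‖ξ‖ ≤ 8/3})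
    (hφ_sum : ∀ ξ : EuclideanSpace ℝ (Fin d), ξ ≠ 0 →
      (∑' j : ℤ, φ ((2:ℝ)^(-j) • ξ)) = 1) :
    ∃ C : ℝ, 0 < C ∧ ∀ U V : EuclideanSpace ℝ (Fin d) → ℂ,
      Measurable U → Measurable V →
      FBnorm d φ 0 r (remFT d φ U V) ≤
        ENNReal.ofReal C * FBnorm d φ (-1) r U * FBnorm d φ 1 r V := by
  refine ⟨6, by norm_num, ?_⟩
  intro U V hU hV
  have hr0 : (0:ℝ) < r := lt_of_lt_of_le one_pos hr1
  set a : ℤ → ℝ≥0∞ := fun j => blockL1 d φ j U with ha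
  set b : ℤ → ℝ≥0∞ := fun k => blockL1 d φ k V with hb
  set NU := FBnorm d φ (-1) r U with hNU
  set NV := FBnorm d φ 1 r V with hNV
  -- the ℓ² norms with weights
  set X := (∑' j : ℤ, (ENNReal.ofReal ((2:ℝ) ^ ((j:ℝ) * (-1))) * a j) ^ (2:ℝ)) ^ (1/2:ℝ) with hX
  set Y := (∑' k : ℤ, (ENNReal.ofReal ((2:ℝ) ^ ((k:ℝ) * 1)) * b k) ^ (2:ℝ)) ^ (1/2:ℝ) with hY
  have hXle : X ≤ NU := by
    rw [hX, hNU]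
    exact lp_mono_aux _ hr0 hr2
  have hYle : Y ≤ NV := by
    rw [hY, hNV]
    exact lp_mono_aux _ hr0 hr2
  -- step 1 : ℓ¹ dominates ℓ^r
  have step1 : FBnorm d φ 0 r (remFT d φ U V) ≤
      ∑' l : ℤ, blockL1 d φ l (remFT d φ U V) := by
    have heq : FBnorm d φ 0 r (remFT d φ U V) =
        (∑' l : ℤ, blockL1 d φ l (remFT d φ U V) ^ r) ^ (1/r) := by
      rw [FBnorm]
      congr 1
      refine tsum_congr fun l => ?_
      rw [mul_zero, Real.rpow_zero, ENNReal.ofReal_one, one_mul]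
    rw [heq]
    have := lp_mono_aux (fun l => blockL1 d φ l (remFT d φ U V)) one_pos hr1
    simpa [ENNReal.rpow_one] using this
  -- step 2 : main summation estimate
  have step2 := main_est hd φ hφ_smooth.continuous hφ_range hφ_supp hφ_sum U V hU hV
  -- step 3 : split the inner sum
  have step3 : ∑' j : ℤ, ∑ k ∈ Finset.Icc (j-1) (j+1), a j * b k ≤
      (∑' j : ℤ, a j * b (j + (-1))) + ((∑' j : ℤ, a j * b (j + 0)) +
        (∑' j : ℤ, a j * b (j + 1))) := by
    calc ∑' j : ℤ, ∑ k ∈ Finset.Icc (j-1) (j+1), a j * b k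
        ≤ ∑' j : ℤ, (a j * b (j + (-1)) + (a j * b (j + 0) + a j * b (j + 1))) := by
          refine ENNReal.tsum_le_tsum fun j => ?_
          have hIcc : Finset.Icc (j-1) (j+1) = {j-1, j, j+1} := by
            ext x; simp only [Finset.mem_Icc, Finset.mem_insert, Finset.mem_singleton]; omega
          rw [hIcc]
          have d1 : j - 1 ∉ ({j, j+1} : Finset ℤ) := by
            simp only [Finset.mem_insert, Finset.mem_singleton]; omega
          have d2 : j ∉ ({j+1} : Finset ℤ) := by
            simp only [Finset.mem_singleton]; omega
          rw [Finset.sum_insert d1, Finset.sum_insert d2, Finset.sum_singleton,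
            sub_eq_add_neg, add_zero]
      _ = _ := by rw [ENNReal.tsum_add]; congr 1; rw [ENNReal.tsum_add]
  -- step 4 : Cauchy–Schwarz with weights for each shift
  have hc : ∀ i : ℤ, -1 ≤ i → ENNReal.ofReal ((2:ℝ) ^ (-(i:ℝ))) ≤ ENNReal.ofReal 2 := by
    intro i hi
    apply ENNReal.ofReal_le_ofReal
    have hle : -(i:ℝ) ≤ 1 := by
      have : (-1:ℝ) ≤ (i:ℝ) := by exact_mod_cast hi
      linarith
    calc (2:ℝ) ^ (-(i:ℝ)) ≤ (2:ℝ) ^ (1:ℝ) :=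
          Real.rpow_le_rpow_of_exponent_le one_le_two hle
      _ = 2 := Real.rpow_one 2
  have step4 : ∀ i : ℤ, -1 ≤ i → ∑' j : ℤ, a j * b (j + i) ≤ ENNReal.ofReal 2 * (X * Y) := by
    intro i hi
    refine le_trans (shift_sum a b i) ?_
    exact mul_le_mul' (hc i hi) (le_refl _)
  -- conclusion
  calc FBnorm d φ 0 r (remFT d φ U V)
      ≤ ∑' l : ℤ, blockL1 d φ l (remFT d φ U V) := step1
    _ ≤ ∑' j : ℤ, ∑ k ∈ Finset.Icc (j-1) (j+1), a j * b k := step2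
    _ ≤ (∑' j : ℤ, a j * b (j + (-1))) + ((∑' j : ℤ, a j * b (j + 0)) +
          (∑' j : ℤ, a j * b (j + 1))) := step3
    _ ≤ ENNReal.ofReal 2 * (X * Y) + (ENNReal.ofReal 2 * (X * Y) +
          ENNReal.ofReal 2 * (X * Y)) :=
        add_le_add (step4 (-1) (by norm_num)) (add_le_add (step4 0 (by norm_num))
          (step4 1 (by norm_num)))
    _ = ENNReal.ofReal 6 * (X * Y) := by
        rw [← add_mul, ← add_mul, ← ENNReal.ofReal_add (by norm_num) (by norm_num),
          ← ENNReal.ofReal_add (by norm_num) (by norm_num)]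
        norm_num
    _ ≤ ENNReal.ofReal 6 * (NU * NV) := by
        exact mul_le_mul' (le_refl _) (mul_le_mul' hXle hYle)
    _ = ENNReal.ofReal 6 * NU * NV := by rw [mul_assoc]

end
end

section
/- Let u₁(t) = e^{tΔ} f with f̂ ∈ L¹(ℝ^d), and define A₂(f)(t) = ∫₀ᵗ e^{(t−τ)Δ} Σᵢ (∂ᵢ e^{τΔ}f)² dτ. Then the Fourier transform of A₂(f)(t) at ξ equals −Σᵢ ∫_{ℝ^d} ηᵢ(ξᵢ−ηᵢ) f̂(ξ−η) f̂(η) · e^{−t|ξ|²} · (1 − e^{−t(|η|²+|ξ−η|²−|ξ|²)})/(|η|²+|ξ−η|²−|ξ|²) dη, and since Σᵢ ηᵢ(ξᵢ−ηᵢ) = η·(ξ−η) and |η|²+|ξ−η|²−|ξ|² = −2η·(ξ−η), this simplifies to (1/2) ∫ f̂(ξ−η) f̂(η) e^{−t|ξ|²} (1 − e^{2tη·(ξ−η)}) dη. -/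
/-!
Write `a = ⟪η, ξ - η⟫`. Since `‖η‖² + ‖ξ - η‖² = ‖ξ‖² - 2a`, the `τ`-integrand
`e^{-(t-τ)‖ξ‖²} e^{-τ(‖η‖² + ‖ξ - η‖²)}` is `e^{-t‖ξ‖²} e^{2aτ}`; the prefactor `-a` cancels the
factor `2a` produced by integrating `e^{2aτ}`, which leaves `½ e^{-t‖ξ‖²} (1 - e^{2ta})` without a
case distinction at `a = 0`. Fubini then exchanges the `τ`- and `η`-integrals.
-/

open MeasureTheory RealInnerProductSpace

theorem integral_exp_mul_exp (a c t : ℝ) :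
    ∫ τ in (0:ℝ)..t, Real.exp (-(t - τ) * c) * (-a) * Real.exp (-τ * (c - 2 * a)) =
      1 / 2 * Real.exp (-t * c) * (1 - Real.exp (2 * t * a)) := by
  have hprim : ∀ τ, HasDerivAt (fun τ => -(1 / 2) * Real.exp (-t * c + 2 * a * τ))
      (Real.exp (-(t - τ) * c) * (-a) * Real.exp (-τ * (c - 2 * a))) τ := by
    intro τ
    refine ((((hasDerivAt_id τ).const_mul (2 * a)).const_add (-t * c)).exp.const_mul
      (-(1 / 2) : ℝ)).congr_deriv ?_
    rw [mul_right_comm (Real.exp _), ← Real.exp_add, id]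
    ring_nf
  rw [intervalIntegral.integral_eq_sub_of_hasDerivAt (fun τ _ => hprim τ)
    (Continuous.intervalIntegrable (by fun_prop) _ _)]
  simp only [Real.exp_add, mul_zero, add_zero]
  ring_nf

theorem integral_smul_eq_zero_of_not_aestronglyMeasurable {α F : Type*} [MeasurableSpace α]
    {μ : Measure α} [NormedAddCommGroup F] [NormedSpace ℝ F] {f : α → F} {g : α → ℝ}
    (hf : ¬ AEStronglyMeasurable f μ) (hg : AEStronglyMeasurable g μ) (hg0 : ∀ x, g x ≠ 0) :
    ∫ x, g x • f x ∂μ = 0 :=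
  integral_undef fun h => hf <|
    (aestronglyMeasurable_smul_iff₀ hg (ae_of_all _ hg0)).1 h.aestronglyMeasurable

section

variable {E : Type*} [SeminormedAddCommGroup E]

noncomputable def heatDuhamelKernel (t : ℝ) (ξ η : E) : ℝ :=
  ∫ τ in (0:ℝ)..t, Real.exp (-(t - τ) * ‖ξ‖ ^ 2) * Real.exp (-τ * (‖η‖ ^ 2 + ‖ξ - η‖ ^ 2))

theorem heatDuhamelKernel_pos {t : ℝ} (ht : 0 < t) (ξ η : E) : 0 < heatDuhamelKernel t ξ η :=
  intervalIntegral.intervalIntegral_pos_of_pos_on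
    (Continuous.intervalIntegrable (by fun_prop) _ _) (fun _ _ => by positivity) ht

theorem continuous_heatDuhamelKernel (t : ℝ) (ξ : E) : Continuous (heatDuhamelKernel t ξ) :=
  intervalIntegral.continuous_parametric_intervalIntegral_of_continuous' (by fun_prop) _ _

variable [InnerProductSpace ℝ E]

theorem norm_sq_add_norm_sub_sq (ξ η : E) :
    ‖η‖ ^ 2 + ‖ξ - η‖ ^ 2 = ‖ξ‖ ^ 2 - 2 * ⟪η, ξ - η⟫ := by
  rw [norm_sub_sq_real, inner_sub_right, real_inner_self_eq_norm_sq, real_inner_comm]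
  ring

theorem integral_exp_mul_neg_inner_mul_exp (t : ℝ) (ξ η : E) :
    ∫ τ in (0:ℝ)..t, Real.exp (-(t - τ) * ‖ξ‖ ^ 2) * (-⟪η, ξ - η⟫) *
        Real.exp (-τ * (‖η‖ ^ 2 + ‖ξ - η‖ ^ 2)) =
      1 / 2 * Real.exp (-t * ‖ξ‖ ^ 2) * (1 - Real.exp (2 * t * ⟪η, ξ - η⟫)) := by
  rw [norm_sq_add_norm_sub_sq]
  exact integral_exp_mul_exp _ _ _

theorem neg_inner_mul_heatDuhamelKernel (t : ℝ) (ξ η : E) :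
    -⟪η, ξ - η⟫ * heatDuhamelKernel t ξ η =
      1 / 2 * Real.exp (-t * ‖ξ‖ ^ 2) * (1 - Real.exp (2 * t * ⟪η, ξ - η⟫)) := by
  rw [heatDuhamelKernel, ← intervalIntegral.integral_const_mul,
    ← integral_exp_mul_neg_inner_mul_exp]
  congr 1 with τ
  ring

end

section

variable {E G : Type*} [SeminormedAddCommGroup E] [MeasurableSpace E] [BorelSpace E]
  [SecondCountableTopology E] {μ : Measure E} [SFinite μ]
  [NormedAddCommGroup G] [NormedSpace ℝ G] [CompleteSpace G]

theorem intervalIntegral_integral_eq_integral_heatDuhamelKernel_smul {t : ℝ} (ht : 0 ≤ t)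
    (ξ : E) (P : E → G)
    (hP : IntegrableOn (fun p : ℝ × E => Real.exp (-p.1 * (‖p.2‖ ^ 2 + ‖ξ - p.2‖ ^ 2)) * ‖P p.2‖)
      (Set.Ioc 0 t ×ˢ Set.univ) (volume.prod μ)) :
    ∫ τ in (0:ℝ)..t, Real.exp (-(t - τ) * ‖ξ‖ ^ 2) •
        ∫ η, Real.exp (-τ * (‖η‖ ^ 2 + ‖ξ - η‖ ^ 2)) • P η ∂μ =
      ∫ η, heatDuhamelKernel t ξ η • P η ∂μ := by
  rcases ht.eq_or_lt with rfl | ht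
  · simp [heatDuhamelKernel]
  by_cases hPm : AEStronglyMeasurable P μ
  · have hprod : (volume.restrict (Set.uIoc 0 t)).prod μ =
        (volume.prod μ).restrict (Set.Ioc 0 t ×ˢ Set.univ) := by
      rw [Set.uIoc_of_le ht.le, ← Measure.prod_restrict, Measure.restrict_univ]
    have hint : Integrable (Function.uncurry fun τ η => Real.exp (-(t - τ) * ‖ξ‖ ^ 2) •
        Real.exp (-τ * (‖η‖ ^ 2 + ‖ξ - η‖ ^ 2)) • P η)
        ((volume.restrict (Set.uIoc 0 t)).prod μ) := by
      refine Integrable.mono' (by rw [hprod]; exact hP) ?_ ?_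
      · exact (Continuous.aestronglyMeasurable (by fun_prop)).smul
          ((Continuous.aestronglyMeasurable (by fun_prop)).smul
            (hPm.comp_quasiMeasurePreserving Measure.quasiMeasurePreserving_snd))
      · rw [hprod]
        filter_upwards [ae_restrict_mem (measurableSet_Ioc.prod MeasurableSet.univ)]
          with ⟨τ, η⟩ ⟨⟨_, hτt⟩, _⟩
        have hdecay : Real.exp (-(t - τ) * ‖ξ‖ ^ 2) ≤ 1 :=
          Real.exp_le_one_iff.2 (by nlinarith [sq_nonneg ‖ξ‖])
        simp only [Function.uncurry_apply_pair, norm_smul, Real.norm_eq_abs, Real.abs_exp]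
        exact mul_le_of_le_one_left (by positivity) hdecay
    simp_rw [← integral_smul]
    rw [intervalIntegral_integral_swap hint]
    congr 1 with η
    simp_rw [heatDuhamelKernel, ← intervalIntegral.integral_smul_const, smul_smul]
  -- Otherwise every `η`-integral is a junk zero: the factors multiplying `P` are measurable and
  -- nowhere zero (the kernel is continuous and positive), so they cannot restore measurability.
  · have hw : ∀ τ, ∫ η, Real.exp (-τ * (‖η‖ ^ 2 + ‖ξ - η‖ ^ 2)) • P η ∂μ = 0 := fun τ =>
      integral_smul_eq_zero_of_not_aestronglyMeasurable hPm
        (Continuous.aestronglyMeasurable (by fun_prop)) (fun _ => (Real.exp_pos _).ne')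
    rw [integral_smul_eq_zero_of_not_aestronglyMeasurable hPm
      (continuous_heatDuhamelKernel t ξ).aestronglyMeasurable
      (fun η => (heatDuhamelKernel_pos ht ξ η).ne')]
    simp only [hw, smul_zero, intervalIntegral.integral_zero]

end

theorem stmt10_general (d : ℕ) :
    (∀ (t : ℝ) (ξ η : EuclideanSpace ℝ (Fin d)),
      (∫ τ in (0:ℝ)..t, Real.exp (-(t-τ) * ‖ξ‖^2) * (-(⟪η, ξ - η⟫)) *
          Real.exp (-τ * (‖η‖^2 + ‖ξ - η‖^2))) =
        (1/2) * Real.exp (-t * ‖ξ‖^2) * (1 - Real.exp (2*t*⟪η, ξ - η⟫))) ∧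
    (∀ (t : ℝ), 0 ≤ t → ∀ (F : EuclideanSpace ℝ (Fin d) → ℂ)
      (ξ : EuclideanSpace ℝ (Fin d)),
      IntegrableOn (fun p : ℝ × EuclideanSpace ℝ (Fin d) =>
          ‖F (ξ - p.2)‖ * ‖F p.2‖ * |⟪p.2, ξ - p.2⟫| *
            Real.exp (-p.1 * (‖p.2‖^2 + ‖ξ - p.2‖^2)))
        (Set.Ioc 0 t ×ˢ Set.univ) (volume.prod volume) →
      (∫ τ in (0:ℝ)..t, ((Real.exp (-(t-τ) * ‖ξ‖^2) : ℝ) : ℂ) *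
          ∫ η, ((-(⟪η, ξ - η⟫) : ℝ) : ℂ) * F (ξ - η) * F η *
            ((Real.exp (-τ * (‖η‖^2 + ‖ξ - η‖^2)) : ℝ) : ℂ)) =
        ∫ η, ((1/2 : ℝ) : ℂ) * F (ξ - η) * F η *
          ((Real.exp (-t * ‖ξ‖^2) : ℝ) : ℂ) *
          ((1:ℂ) - ((Real.exp (2*t*⟪η, ξ - η⟫) : ℝ) : ℂ))) := by
  refine ⟨integral_exp_mul_neg_inner_mul_exp, fun t ht F ξ hF => ?_⟩
  set P : EuclideanSpace ℝ (Fin d) → ℂ := fun η => ((-⟪η, ξ - η⟫ : ℝ) : ℂ) * F (ξ - η) * F η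
  have hP : IntegrableOn (fun p : ℝ × EuclideanSpace ℝ (Fin d) =>
      Real.exp (-p.1 * (‖p.2‖ ^ 2 + ‖ξ - p.2‖ ^ 2)) * ‖P p.2‖)
      (Set.Ioc 0 t ×ˢ Set.univ) (volume.prod volume) := by
    refine hF.congr_fun (fun p _ => ?_) (measurableSet_Ioc.prod MeasurableSet.univ)
    simp only [P, norm_mul, Complex.norm_real, Real.norm_eq_abs, abs_neg]
    ring
  have hsymbol : ∀ η, ((1/2 : ℝ) : ℂ) * F (ξ - η) * F η * ((Real.exp (-t * ‖ξ‖^2) : ℝ) : ℂ) *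
      ((1:ℂ) - ((Real.exp (2*t*⟪η, ξ - η⟫) : ℝ) : ℂ)) = heatDuhamelKernel t ξ η • P η := by
    intro η
    have h := congrArg (fun x : ℝ => (x : ℂ)) (neg_inner_mul_heatDuhamelKernel t ξ η)
    simp only [P, Complex.real_smul]
    push_cast at h ⊢
    linear_combination (-(F (ξ - η) * F η)) * h
  calc _ = ∫ τ in (0:ℝ)..t, Real.exp (-(t - τ) * ‖ξ‖ ^ 2) •
        ∫ η, Real.exp (-τ * (‖η‖ ^ 2 + ‖ξ - η‖ ^ 2)) • P η := by
        refine intervalIntegral.integral_congr fun τ _ => ?_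
        simp only [P, Complex.real_smul]
        exact congrArg _ (integral_congr_ae (ae_of_all _ fun η => mul_comm _ _))
    _ = _ := intervalIntegral_integral_eq_integral_heatDuhamelKernel_smul ht ξ P hP
    _ = _ := integral_congr_ae (ae_of_all _ fun η => (hsymbol η).symm)

/-- the explicit Duhamel/Fourier computation for the second iterate
`A₂(f)(t) = ∫₀ᵗ e^{(t−τ)Δ} Σᵢ (∂ᵢ e^{τΔ}f)² dτ`. First, the pointwise τ-integral
identity `∫₀ᵗ e^{-(t-τ)|ξ|²} (−η·(ξ−η)) e^{-τ(|η|²+|ξ−η|²)} dτ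
 = (1/2) e^{-t|ξ|²} (1 − e^{2t η·(ξ−η)})` (using `Σᵢ ηᵢ(ξᵢ−ηᵢ) = η·(ξ−η)` and
`|η|²+|ξ−η|²−|ξ|² = −2η·(ξ−η)`); consequently, under an integrability hypothesis
allowing Fubini, the Fourier transform of `A₂(f)(t)` at `ξ`, i.e.
`∫₀ᵗ e^{-(t-τ)|ξ|²} ∫ (−η·(ξ−η)) f̂(ξ−η) f̂(η) e^{-τ(|η|²+|ξ−η|²)} dη dτ`, equals
`(1/2) ∫ f̂(ξ−η) f̂(η) e^{-t|ξ|²} (1 − e^{2tη·(ξ−η)}) dη`. -/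
theorem stmt10 (d : ℕ) (hd : 1 ≤ d) :
    (∀ (t : ℝ) (ξ η : EuclideanSpace ℝ (Fin d)),
      (∫ τ in (0:ℝ)..t, Real.exp (-(t-τ) * ‖ξ‖^2) * (-(⟪η, ξ - η⟫)) *
          Real.exp (-τ * (‖η‖^2 + ‖ξ - η‖^2))) =
        (1/2) * Real.exp (-t * ‖ξ‖^2) * (1 - Real.exp (2*t*⟪η, ξ - η⟫))) ∧
    (∀ (t : ℝ), 0 ≤ t → ∀ (F : EuclideanSpace ℝ (Fin d) → ℂ)
      (ξ : EuclideanSpace ℝ (Fin d)),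
      IntegrableOn (fun p : ℝ × EuclideanSpace ℝ (Fin d) =>
          ‖F (ξ - p.2)‖ * ‖F p.2‖ * |⟪p.2, ξ - p.2⟫| *
            Real.exp (-p.1 * (‖p.2‖^2 + ‖ξ - p.2‖^2)))
        (Set.Ioc 0 t ×ˢ Set.univ) (volume.prod volume) →
      (∫ τ in (0:ℝ)..t, ((Real.exp (-(t-τ) * ‖ξ‖^2) : ℝ) : ℂ) *
          ∫ η, ((-(⟪η, ξ - η⟫) : ℝ) : ℂ) * F (ξ - η) * F η *
            ((Real.exp (-τ * (‖η‖^2 + ‖ξ - η‖^2)) : ℝ) : ℂ)) =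
        ∫ η, ((1/2 : ℝ) : ℂ) * F (ξ - η) * F η *
          ((Real.exp (-t * ‖ξ‖^2) : ℝ) : ℂ) *
          ((1:ℂ) - ((Real.exp (2*t*⟪η, ξ - η⟫) : ℝ) : ℂ))) :=
  stmt10_general d
end
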